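/- arXiv:0910.1063 — 2 statements merged into one kernel-verified Lean document; each statement's English description precedes it below -/
import Mathlib

section
/- Let L > 1, ε > 0, a > 0 with L^ε ≤ 2, let g* = (L^ε − 1)/(L^{2ε} a), f(x) = L^ε x − L^{2ε} a x², and let (ḡₙ)ₙ∈ℤ be the complete trajectory in (0, g*). Then there exists C > 0 such that ḡₙ ≤ C L^{ε n} for all n ≤ 0. -/
/-- Exponential ultraviolet decay of the heteroclinic trajectory: for the
complete trajectory `(ḡₙ)ₙ∈ℤ` in `(0, g*)` there exists `C > 0` with
`ḡₙ ≤ C (L^ε)^n` for all `n ≤ 0`. -/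
theorem quadratic_rg_trajectory_uv_decay (L ε a : ℝ) (hL : 1 < L) (hε : 0 < ε) (ha : 0 < a)
    (hL2 : L ^ ε ≤ 2)
    (f : ℝ → ℝ) (hf : ∀ x, f x = L ^ ε * x - L ^ (2 * ε) * a * x ^ 2)
    (gstar : ℝ) (hg : gstar = (L ^ ε - 1) / (L ^ (2 * ε) * a))
    (g : ℤ → ℝ) (hmem : ∀ n, g n ∈ Set.Ioo (0 : ℝ) gstar)
    (hrec : ∀ n, g (n + 1) = f (g n)) :
    ∃ C > 0, ∀ n : ℤ, n ≤ 0 → g n ≤ C * (L ^ ε) ^ n := by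
  set lam := L ^ ε with hlam_def
  have hL0 : (0:ℝ) < L := by linarith
  have hlam1 : 1 < lam := by
    rw [hlam_def]
    exact (Real.one_lt_rpow_iff_of_pos hL0).mpr (Or.inl ⟨hL, hε⟩)
  have hlam0 : (0:ℝ) < lam := by linarith
  have hA : L ^ (2*ε) = lam ^ 2 := by
    rw [hlam_def, two_mul, Real.rpow_add hL0, sq]
  have hgs : gstar * (lam ^ 2 * a) = lam - 1 := by
    rw [hg, hA]
    exact div_mul_cancel₀ _ (by positivity)
  have hgs0 : 0 < gstar := lt_trans (hmem 0).1 (hmem 0).2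
  have hrec' : ∀ n : ℤ, g (n+1) = lam * g n - lam ^ 2 * a * (g n) ^ 2 := by
    intro n; rw [hrec, hf, hA]
  have hstep : ∀ n : ℤ, g n ≤ g (n+1) := by
    intro n
    have h1 := (hmem n).1
    have h2 := (hmem n).2
    rw [hrec']
    nlinarith [mul_pos (mul_pos (show (0:ℝ) < lam ^ 2 * a by positivity) h1)
      (sub_pos.mpr h2), mul_pos h1 (sub_pos.mpr h2)]
  have hmono : Monotone g := monotone_int_of_le_succ hstep
  have hkey : ∀ n : ℤ, lam * (1 / g (n+1)) - 2*a*lam ≤ 1 / g n := by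
    intro n
    have hx : (0:ℝ) < g n := (hmem n).1
    have hx2 : g n < gstar := (hmem n).2
    have hy : (0:ℝ) < g (n+1) := (hmem (n+1)).1
    have hyval := hrec' n
    have h2ax : 2 * lam * a * g n ≤ 1 := by
      nlinarith [mul_lt_mul_of_pos_left hx2 (show (0:ℝ) < 2*lam*a by positivity)]
    have hstar : lam * g n ≤ (1 + 2*a*lam*(g n)) * g (n+1) := by
      rw [hyval]
      nlinarith [mul_nonneg (mul_nonneg (show (0:ℝ) ≤ a*lam^2 by positivity)
        (sq_nonneg (g n))) (by linarith : (0:ℝ) ≤ 1 - 2*lam*a*(g n))]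
    have h2 : lam / g (n+1) ≤ (1 + 2*a*lam*(g n)) / g n :=
      (div_le_div_iff₀ hy hx).mpr hstar
    have h3 : (1 + 2*a*lam*(g n)) / g n = 1 / g n + 2*a*lam := by
      field_simp
    rw [mul_one_div]
    linarith [h2, h3.le, h3.ge]
  set c : ℝ := 2*a*lam/(lam-1) with hc_def
  have hc0 : (0:ℝ) < c := div_pos (by positivity) (by linarith)
  have hc : c * (lam - 1) = 2*a*lam := div_mul_cancel₀ _ (by linarith : lam - 1 ≠ 0)
  set w : ℤ → ℝ := fun n => 1 / g n - c with hw_def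
  have hwval : ∀ n : ℤ, w n = 1 / g n - c := fun n => rfl
  have hw : ∀ n : ℤ, lam * w (n+1) ≤ w n := by
    intro n
    have h1 := hkey n
    have hlc : lam * c = 2*a*lam + c := by nlinarith [hc]
    rw [hwval, hwval, mul_sub, hlc]
    linarith
  have hiter : ∀ (m : ℤ) (k : ℕ), lam ^ k * w m ≤ w (m - k) := by
    intro m k
    induction k with
    | zero => simp
    | succ k ih =>
      have h1 := hw (m - (k+1 : ℕ))
      have heq : (m - (k+1 : ℕ) : ℤ) + 1 = m - k := by push_cast; ring
      rw [heq] at h1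
      calc lam ^ (k+1) * w m = lam * (lam ^ k * w m) := by ring
        _ ≤ lam * w (m - k) := mul_le_mul_of_nonneg_left ih hlam0.le
        _ ≤ w (m - (k+1 : ℕ)) := h1
  by_cases hcase : ∃ m ≤ (0:ℤ), 0 < w m
  · obtain ⟨m, hm0, hwm⟩ := hcase
    have hzm : (0:ℝ) < lam ^ (-m) := zpow_pos hlam0 _
    refine ⟨max (lam ^ (-m) / w m) (g 0 * lam ^ (-m)), ?_, ?_⟩
    · exact lt_max_of_lt_right (mul_pos (hmem 0).1 hzm)
    intro n hn
    have hzn : (0:ℝ) < lam ^ n := zpow_pos hlam0 _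
    rcases le_or_gt n m with h | h
    · set k : ℕ := (m - n).toNat with hk_def
      have hk : (k : ℤ) = m - n := Int.toNat_of_nonneg (by linarith)
      have hit := hiter m k
      have hmn : m - (k:ℤ) = n := by rw [hk]; ring
      rw [hmn] at hit
      have hQ : (0:ℝ) < lam ^ k * w m := by positivity
      have hwn : lam ^ k * w m ≤ 1 / g n := by
        rw [hwval] at hit; linarith
      have hgn : g n ≤ 1 / (lam ^ k * w m) := by
        have := one_div_le_one_div_of_le hQ hwn
        rwa [one_div_one_div] at this
      have h1 : lam ^ (-m) * lam ^ n = (lam ^ k : ℝ)⁻¹ := by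
        rw [← zpow_add₀ (ne_of_gt hlam0)]
        have : (-m + n : ℤ) = -(k:ℤ) := by rw [hk]; ring
        rw [this, zpow_neg, zpow_natCast]
      have hEq : 1 / (lam ^ k * w m) = (lam ^ (-m) / w m) * lam ^ n := by
        calc 1 / (lam ^ k * w m) = (lam ^ k : ℝ)⁻¹ / w m := by
              rw [one_div, mul_inv, div_eq_mul_inv]
          _ = (lam ^ (-m) * lam ^ n) / w m := by rw [h1]
          _ = (lam ^ (-m) / w m) * lam ^ n := by ring
      calc g n ≤ 1 / (lam ^ k * w m) := hgn
        _ = (lam ^ (-m) / w m) * lam ^ n := hEq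
        _ ≤ max (lam ^ (-m) / w m) (g 0 * lam ^ (-m)) * lam ^ n :=
            mul_le_mul_of_nonneg_right (le_max_left _ _) hzn.le
    · have hgn : g n ≤ g 0 := hmono hn
      have hz : lam ^ m ≤ lam ^ n := zpow_le_zpow_right₀ hlam1.le h.le
      calc g n ≤ g 0 := hgn
        _ = (g 0 * lam ^ (-m)) * lam ^ m := by
            rw [mul_assoc, ← zpow_add₀ (ne_of_gt hlam0)]
            simp
        _ ≤ (g 0 * lam ^ (-m)) * lam ^ n :=
            mul_le_mul_of_nonneg_left hz (mul_pos (hmem 0).1 hzm).le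
        _ ≤ max (lam ^ (-m) / w m) (g 0 * lam ^ (-m)) * lam ^ n :=
            mul_le_mul_of_nonneg_right (le_max_right _ _) hzn.le
  · exfalso
    push_neg at hcase
    have hlow : ∀ n ≤ (0:ℤ), 1 ≤ c * g n := by
      intro n hn
      have h1 := hcase n hn
      have hx : (0:ℝ) < g n := (hmem n).1
      rw [hwval, sub_nonpos] at h1
      calc (1:ℝ) = (1 / g n) * g n := by field_simp
        _ ≤ c * g n := mul_le_mul_of_nonneg_right h1 hx.le
    set c' : ℝ := lam ^ 2 * a * (gstar - g 0) / c with hc'_def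
    have hc'0 : 0 < c' := div_pos (by nlinarith [(hmem 0).2]) hc0
    -- uniform increment for n+1 ≤ 0
    have hstep2 : ∀ n : ℤ, n + 1 ≤ 0 → g n + c' ≤ g (n+1) := by
      intro n hn
      have hx : (0:ℝ) < g n := (hmem n).1
      have hx2 : g n < gstar := (hmem n).2
      have hxup : g n ≤ g 0 := hmono (by linarith : n ≤ 0)
      have hxlow : 1 ≤ c * g n := hlow n (by linarith)
      rw [hrec']
      have hfx : lam * g n - lam ^ 2 * a * (g n) ^ 2 - g n
          = lam ^ 2 * a * (g n) * (gstar - g n) := by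
        linear_combination (-(g n)) * hgs
      have h5 : gstar - g 0 ≤ c * g n * (gstar - g n) := by
        nlinarith [mul_nonneg (sub_nonneg.mpr hxlow) (sub_nonneg.mpr hx2.le)]
      have h6 : c' ≤ lam ^ 2 * a * (g n) * (gstar - g n) := by
        rw [hc'_def, div_le_iff₀ hc0]
        nlinarith [mul_le_mul_of_nonneg_left h5 (show (0:ℝ) ≤ lam^2*a by positivity)]
      linarith
    have hclaim : ∀ k : ℕ, g (-(k:ℤ)) + k * c' ≤ g 0 := by
      intro k
      induction k with
      | zero => simp
      | succ k ih =>
        have h1 := hstep2 (-(k+1:ℕ):ℤ) (by push_cast; linarith [Nat.cast_nonneg (α := ℝ) k])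
        have heq : (-(k+1:ℕ):ℤ) + 1 = -(k:ℤ) := by push_cast; ring
        rw [heq] at h1
        have : ((k+1:ℕ):ℝ) * c' = (k:ℝ) * c' + c' := by push_cast; ring
        rw [this]
        linarith
    obtain ⟨k, hk⟩ := exists_nat_gt (g 0 / c')
    have h1 := hclaim k
    have h2 : (0:ℝ) < g (-(k:ℤ)) := (hmem _).1
    have h4 : g 0 < k * c' := by rwa [div_lt_iff₀ hc'0] at hk
    linarith
end

section
/- Let λ > 1 and let (xₙ)ₙ∈ℤ be a two-sided real sequence satisfying |xₙ₊₁ − λ xₙ| ≤ C λ^{2n} for all n ≤ 0, with C ≥ 0, and xₙ bounded as n → −∞. Then xₙ → 0 as n → −∞, and in fact |xₙ| ≤ C' λ^{n} for all n ≤ 0 for some constant C' depending on C and λ. -/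
/-- Unstable-direction decay: if `λ > 1`, `|xₙ₊₁ − λ xₙ| ≤ C λ^(2n)` for `n ≤ 0`,
and `xₙ` is bounded as `n → −∞`, then `xₙ → 0` as `n → −∞`, and in fact
`|xₙ| ≤ C' λ^n` for all `n ≤ 0` for some constant `C' > 0`. -/
theorem unstable_direction_decay (l : ℝ) (hl : 1 < l) (C : ℝ) (hC : 0 ≤ C)
    (x : ℤ → ℝ)
    (hrec : ∀ n : ℤ, n ≤ 0 → |x (n + 1) - l * x n| ≤ C * l ^ (2 * n))
    (hbdd : ∃ M : ℝ, ∀ n : ℤ, n ≤ 0 → |x n| ≤ M) :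
    Filter.Tendsto x Filter.atBot (nhds 0) ∧
      ∃ C' > (0 : ℝ), ∀ n : ℤ, n ≤ 0 → |x n| ≤ C' * l ^ n := by
  have lpos : 0 < l := lt_trans one_pos hl
  have lne : l ≠ 0 := ne_of_gt lpos
  have l1 : 0 < l - 1 := by linarith
  set K : ℝ := |x 0| + C / (l - 1) + 1 with hK
  have hKpos : 0 < K := by positivity
  have key : ∀ m : ℕ, |x (-(m : ℤ))| ≤
      (|x 0| + C / (l - 1) * (1 - l ^ (-(m : ℤ)))) * l ^ (-(m : ℤ)) := by
    intro m
    induction m with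
    | zero => simp
    | succ m ih =>
      have hm1 : (-(((m : ℕ) + 1 : ℕ) : ℤ)) ≤ 0 := by push_cast; omega
      have h := hrec (-(((m : ℕ) + 1 : ℕ) : ℤ)) hm1
      have h1 : (-(((m : ℕ) + 1 : ℕ) : ℤ)) + 1 = -(m : ℤ) := by push_cast; ring
      rw [h1] at h
      set a := x (-(m : ℤ)) with ha
      set b := x (-(((m : ℕ) + 1 : ℕ) : ℤ)) with hb
      have htri : l * |b| ≤ |a| + |a - l * b| := by
        have h2 := abs_sub_abs_le_abs_sub (l * b) a
        rw [abs_sub_comm] at h2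
        have : |l * b| = l * |b| := by rw [abs_mul, abs_of_pos lpos]
        linarith
      set p : ℝ := l ^ (-(m : ℤ)) with hp
      have hppos : 0 < p := zpow_pos lpos _
      have e1 : l ^ (-(((m : ℕ) + 1 : ℕ) : ℤ)) = p / l := by
        rw [hp, show (-(((m : ℕ) + 1 : ℕ) : ℤ)) = -(m : ℤ) + (-1) by push_cast; ring,
          zpow_add₀ lne, zpow_neg_one, div_eq_mul_inv]
      have e2 : l ^ (2 * (-(((m : ℕ) + 1 : ℕ) : ℤ))) = p * p / (l * l) := by
        rw [hp, show (2 * (-(((m : ℕ) + 1 : ℕ) : ℤ))) = -(m : ℤ) + -(m : ℤ) + (-1) + (-1)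
          by push_cast; ring, zpow_add₀ lne, zpow_add₀ lne, zpow_add₀ lne, zpow_neg_one]
        field_simp
      rw [e1]
      rw [e2] at h
      have goal' : l * |b| ≤ (|x 0| + C / (l - 1) * (1 - p / l)) * p := by
        have hcdiff : C / (l - 1) * (1 - p / l) * p - C / (l - 1) * (1 - p) * p
            - C * (p * p / (l * l)) = C * p * p * (l - 1) / (l * l) := by
          field_simp
          ring
        have hnon : 0 ≤ C * p * p * (l - 1) / (l * l) := by positivity
        nlinarith [ih, htri, h]
      rw [show (|x 0| + C / (l - 1) * (1 - p / l)) * (p / l)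
          = ((|x 0| + C / (l - 1) * (1 - p / l)) * p) / l by ring, le_div_iff₀ lpos]
      linarith [goal']
  -- uniform bound
  have bound : ∀ n : ℤ, n ≤ 0 → |x n| ≤ K * l ^ n := by
    intro n hn
    obtain ⟨m, rfl⟩ := Int.exists_eq_neg_ofNat hn
    have hppos : (0:ℝ) < l ^ (-(m : ℤ)) := zpow_pos lpos _
    have hp1 : l ^ (-(m : ℤ)) ≤ 1 := zpow_le_one_of_nonpos₀ (le_of_lt hl) (by omega)
    have := key m
    have hcoef : |x 0| + C / (l - 1) * (1 - l ^ (-(m : ℤ))) ≤ K := by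
      have : C / (l - 1) * (1 - l ^ (-(m : ℤ))) ≤ C / (l - 1) * 1 := by
        apply mul_le_mul_of_nonneg_left (by linarith) (by positivity)
      rw [hK]; linarith
    calc |x (-(m:ℤ))| ≤ (|x 0| + C / (l - 1) * (1 - l ^ (-(m : ℤ)))) * l ^ (-(m : ℤ)) := this
      _ ≤ K * l ^ (-(m : ℤ)) := mul_le_mul_of_nonneg_right hcoef (le_of_lt hppos)
  constructor
  · have hev : ∀ᶠ n : ℤ in Filter.atBot, ‖x n‖ ≤ K * l ^ n := by
      filter_upwards [Filter.eventually_le_atBot (0 : ℤ)] with n hn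
      simpa using bound n hn
    refine squeeze_zero_norm' hev ?_
    have hnat : Filter.Tendsto (fun m : ℕ => l⁻¹ ^ m) Filter.atTop (nhds 0) :=
      tendsto_pow_atTop_nhds_zero_of_lt_one (by positivity) (inv_lt_one_of_one_lt₀ hl)
    have hmap : Filter.Tendsto (fun n : ℤ => (-n).toNat) Filter.atBot Filter.atTop := by
      refine Filter.tendsto_atTop.2 fun b => ?_
      filter_upwards [Filter.eventually_le_atBot (-(b : ℤ))] with n hn
      omega
    have h2 : Filter.Tendsto (fun n : ℤ => l ^ n) Filter.atBot (nhds 0) := by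
      refine (hnat.comp hmap).congr' ?_
      filter_upwards [Filter.eventually_le_atBot (0 : ℤ)] with n hn
      have h3 : ((-n).toNat : ℤ) = -n := Int.toNat_of_nonneg (by omega)
      simp only [Function.comp]
      rw [← zpow_natCast l⁻¹, h3, zpow_neg, inv_zpow, inv_inv]
    simpa using h2.const_mul K
  · exact ⟨K, hKpos, bound⟩
end
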